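/- Let (i_n) and (j_n) be sequences of positive integers such that i_n + j_n → ∞ and i_n/(i_n + j_n) → q for some q ∈ [0,1]. Then for every continuous function h : [0,1] → ℝ, the integrals ∫₀¹ h dβ_{i_n,j_n} converge to h(q) as n → ∞. -/

import Mathlib

open MeasureTheory

/-- The normalizing constant `B(i,j) = (i-1)!(j-1)!/(i+j-1)!` of the Beta distribution. -/
noncomputable def betaB (i j : ℕ) : ℝ :=
  (((i - 1).factorial : ℝ) * ((j - 1).factorial : ℝ)) / ((i + j - 1).factorial : ℝ)

/-- The Beta(i,j) probability measure on `[0,1] ⊆ ℝ`, given by the density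
`p ↦ p^(i-1) (1-p)^(j-1) / B(i,j)` with respect to Lebesgue measure on `[0,1]`. -/
noncomputable def betaMeasure (i j : ℕ) : Measure ℝ :=
  (volume.restrict (Set.Icc (0:ℝ) 1)).withDensity
    (fun p => ENNReal.ofReal (p ^ (i - 1) * (1 - p) ^ (j - 1) / betaB i j))

open Filter

/-!
Integration by parts gives `∫₀¹ x^a (1-x)^b dx = a! b! / (a+b+1)!`, so the moments of `β_{i,j}`
are ratios of Beta constants: its mean is `m = i/(i+j)` and
`∫ (x - q)² dβ_{i,j} = m(1-m)/(i+j+1) + (m-q)²`, which tends to `0` under the hypotheses.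
For probability measures concentrated on a compact `K ∋ q` this forces `∫ h → h q`, because
continuity at `q` and boundedness on `K` give `|h x - h q| ≤ ε + C (x-q)²` on `K`.
-/

open Set Topology
open scoped Nat

theorem integral_pow_mul_one_sub_pow_succ (a b : ℕ) :
    ∫ x in (0:ℝ)..1, x ^ a * (1 - x) ^ (b + 1) =
      (b + 1) / (a + 1) * ∫ x in (0:ℝ)..1, x ^ (a + 1) * (1 - x) ^ b := by
  have hu : ∀ x ∈ uIcc (0:ℝ) 1,
      HasDerivAt (fun y => (1 - y) ^ (b + 1)) (-(b + 1) * (1 - x) ^ b) x := fun x _ =>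
    (((hasDerivAt_id x).const_sub 1).fun_pow (b + 1)).congr_deriv (by simp; ring)
  have hv : ∀ x ∈ uIcc (0:ℝ) 1, HasDerivAt (fun y : ℝ => y ^ (a + 1) / (a + 1)) (x ^ a) x :=
    fun x _ => ((hasDerivAt_pow (a + 1) x).div_const _).congr_deriv (by push_cast; field_simp)
  have parts := intervalIntegral.integral_mul_deriv_eq_deriv_mul hu hv
    (Continuous.intervalIntegrable (by fun_prop) _ _)
    (Continuous.intervalIntegrable (by fun_prop) _ _)
  calc ∫ x in (0:ℝ)..1, x ^ a * (1 - x) ^ (b + 1)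
      = ∫ x in (0:ℝ)..1, (1 - x) ^ (b + 1) * x ^ a := by simp_rw [mul_comm]
    _ = ∫ x in (0:ℝ)..1, -(-(b + 1) * (1 - x) ^ b * (x ^ (a + 1) / (a + 1))) := by
      rw [parts, intervalIntegral.integral_neg]
      simp
    _ = (b + 1) / (a + 1) * ∫ x in (0:ℝ)..1, x ^ (a + 1) * (1 - x) ^ b := by
      rw [← intervalIntegral.integral_const_mul]
      congr 1 with x
      field_simp

theorem integral_pow_mul_one_sub_pow (a b : ℕ) :
    ∫ x in (0:ℝ)..1, x ^ a * (1 - x) ^ b = a ! * b ! / (a + b + 1)! := by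
  induction b generalizing a with
  | zero => simp [Nat.factorial_succ, field]
  | succ b ih =>
    rw [integral_pow_mul_one_sub_pow_succ, ih, show a + 1 + b + 1 = a + (b + 1) + 1 by ring,
      Nat.factorial_succ a, Nat.factorial_succ b]
    push_cast
    field_simp

theorem betaB_pos (i j : ℕ) : 0 < betaB i j := by
  unfold betaB
  positivity

theorem betaB_eq_integral {i j : ℕ} (hi : 1 ≤ i) (hj : 1 ≤ j) :
    betaB i j = ∫ x in (0:ℝ)..1, x ^ (i - 1) * (1 - x) ^ (j - 1) := by
  rw [integral_pow_mul_one_sub_pow, betaB, show i + j - 1 = i - 1 + (j - 1) + 1 by omega]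

theorem betaB_succ_left {i j : ℕ} (hi : 1 ≤ i) (hj : 1 ≤ j) :
    betaB (i + 1) j = i / (i + j) * betaB i j := by
  obtain ⟨a, rfl⟩ := Nat.exists_eq_add_of_le' hi
  obtain ⟨b, rfl⟩ := Nat.exists_eq_add_of_le' hj
  simp only [betaB, Nat.add_sub_cancel, show a + 1 + 1 + (b + 1) - 1 = a + b + 1 + 1 by omega,
    show a + 1 + (b + 1) - 1 = a + b + 1 by omega, Nat.factorial_succ]
  push_cast
  field_simp
  ring

theorem integral_betaMeasure (i j : ℕ) (g : ℝ → ℝ) :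
    ∫ x, g x ∂betaMeasure i j =
      ∫ x in Icc (0:ℝ) 1, x ^ (i - 1) * (1 - x) ^ (j - 1) / betaB i j * g x := by
  rw [betaMeasure, integral_withDensity_eq_integral_toReal_smul (by fun_prop)
    (.of_forall fun _ => ENNReal.ofReal_lt_top)]
  refine setIntegral_congr_fun measurableSet_Icc fun x hx => ?_
  have hx0 : 0 ≤ x := hx.1
  have hx1 : 0 ≤ 1 - x := sub_nonneg.2 hx.2
  have hB := betaB_pos i j
  rw [ENNReal.toReal_ofReal (by positivity), smul_eq_mul]

theorem ae_mem_Icc_betaMeasure (i j : ℕ) : ∀ᵐ x ∂betaMeasure i j, x ∈ Icc (0:ℝ) 1 :=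
  (withDensity_absolutelyContinuous _ _).ae_le (ae_restrict_mem measurableSet_Icc)

theorem integral_pow_betaMeasure {i j : ℕ} (hi : 1 ≤ i) (hj : 1 ≤ j) (k : ℕ) :
    ∫ x, x ^ k ∂betaMeasure i j = betaB (i + k) j / betaB i j := by
  have hik : ∀ x : ℝ, x ^ (i - 1) * (1 - x) ^ (j - 1) / betaB i j * x ^ k =
      x ^ (i + k - 1) * (1 - x) ^ (j - 1) / betaB i j := fun x => by
    rw [show i + k - 1 = i - 1 + k by omega, pow_add]; ring
  rw [integral_betaMeasure, funext hik, MeasureTheory.integral_div, integral_Icc_eq_integral_Ioc,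
    ← intervalIntegral.integral_of_le zero_le_one, betaB_eq_integral (i := i + k) (by omega) hj]

theorem isProbabilityMeasure_betaMeasure {i j : ℕ} (hi : 1 ≤ i) (hj : 1 ≤ j) :
    IsProbabilityMeasure (betaMeasure i j) := by
  have h := integral_pow_betaMeasure hi hj 0
  rw [isProbabilityMeasure_iff_real]
  simpa [div_self (betaB_pos i j).ne'] using h

theorem ContinuousOn.integrable_of_ae_mem {X E : Type*} [TopologicalSpace X] [T2Space X]
    [MeasurableSpace X] [OpensMeasurableSpace X] [NormedAddCommGroup E] {μ : Measure X}
    [IsFiniteMeasure μ] {K : Set X} {f : X → E} (hf : ContinuousOn f K) (hK : IsCompact K)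
    (hμK : ∀ᵐ x ∂μ, x ∈ K) : Integrable f μ := by
  rw [← Measure.restrict_eq_self_of_ae_mem hμK]
  exact hf.integrableOn_compact hK

theorem integral_sq_sub_betaMeasure {i j : ℕ} (hi : 1 ≤ i) (hj : 1 ≤ j) (q : ℝ) :
    ∫ x, (x - q) ^ 2 ∂betaMeasure i j =
      i / (i + j) * (1 - i / (i + j)) / (i + j + 1) + (i / (i + j) - q) ^ 2 := by
  have := isProbabilityMeasure_betaMeasure hi hj
  have hint (k : ℕ) : Integrable (fun x : ℝ => x ^ k) (betaMeasure i j) :=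
    (continuous_pow k).continuousOn.integrable_of_ae_mem isCompact_Icc (ae_mem_Icc_betaMeasure i j)
  have hmean := integral_pow_betaMeasure hi hj 1
  have hsq := integral_pow_betaMeasure hi hj 2
  rw [betaB_succ_left hi hj] at hmean
  rw [show i + 2 = i + 1 + 1 by rfl, betaB_succ_left (by omega) hj, betaB_succ_left hi hj] at hsq
  have hexp : (fun x : ℝ => (x - q) ^ 2) = fun x => x ^ 2 - 2 * q * x ^ 1 + q ^ 2 := by
    ext x; ring
  rw [hexp, integral_add (f := fun x : ℝ => x ^ 2 - 2 * q * x ^ 1)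
      ((hint 2).sub ((hint 1).const_mul _)) (integrable_const _),
    integral_sub (hint 2) ((hint 1).const_mul _), integral_const_mul, hmean, hsq, integral_const,
    probReal_univ]
  have hB := betaB_pos i j
  have hi' : (1 : ℝ) ≤ i := by exact_mod_cast hi
  have hj' : (1 : ℝ) ≤ j := by exact_mod_cast hj
  push_cast
  field_simp
  ring

theorem exists_abs_sub_le_add_mul_sq {K : Set ℝ} {h : ℝ → ℝ} {q M : ℝ}
    (hM : ∀ x ∈ K, |h x| ≤ M) (hq : q ∈ K) (hcont : ContinuousWithinAt h K q) {ε : ℝ}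
    (hε : 0 < ε) : ∃ C, ∀ x ∈ K, |h x - h q| ≤ ε + C * (x - q) ^ 2 := by
  obtain ⟨δ, hδ, hnear⟩ := Metric.continuousWithinAt_iff.1 hcont ε hε
  have hM0 : 0 ≤ M := (abs_nonneg _).trans (hM q hq)
  refine ⟨2 * M / δ ^ 2, fun x hx => ?_⟩
  rcases lt_or_ge |x - q| δ with hxq | hxq
  · have hclose : |h x - h q| < ε := by simpa [Real.dist_eq] using hnear hx (by rwa [Real.dist_eq])
    have : 0 ≤ 2 * M / δ ^ 2 * (x - q) ^ 2 := by positivity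
    linarith
  · have hfar : 2 * M ≤ 2 * M / δ ^ 2 * (x - q) ^ 2 := by
      rw [div_mul_eq_mul_div, le_div_iff₀ (by positivity), ← sq_abs (x - q)]
      gcongr
    calc |h x - h q| ≤ |h x| + |h q| := abs_sub _ _
      _ ≤ 2 * M := by linarith [hM x hx, hM q hq]
      _ ≤ ε + 2 * M / δ ^ 2 * (x - q) ^ 2 := by linarith

theorem tendsto_integral_of_tendsto_integral_sq_sub {ι : Type*} {l : Filter ι}
    {μ : ι → Measure ℝ} [∀ n, IsProbabilityMeasure (μ n)] {K : Set ℝ} (hK : IsCompact K)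
    (hμK : ∀ n, ∀ᵐ x ∂μ n, x ∈ K) {q : ℝ} (hq : q ∈ K) {h : ℝ → ℝ} (hh : ContinuousOn h K)
    (hvar : Tendsto (fun n => ∫ x, (x - q) ^ 2 ∂μ n) l (𝓝 0)) :
    Tendsto (fun n => ∫ x, h x ∂μ n) l (𝓝 (h q)) := by
  obtain ⟨M, hM⟩ := hK.exists_bound_of_continuousOn hh
  rw [Metric.tendsto_nhds]
  intro ε hε
  obtain ⟨C, hC⟩ := exists_abs_sub_le_add_mul_sq (fun x hx => (hM x hx : ‖h x‖ ≤ M)) hq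
    (hh q hq) (half_pos hε)
  have hCvar : Tendsto (fun n => C * ∫ x, (x - q) ^ 2 ∂μ n) l (𝓝 0) := by
    simpa using hvar.const_mul C
  filter_upwards [hCvar.eventually (gt_mem_nhds (half_pos hε))] with n hn
  have hint_h : Integrable h (μ n) := hh.integrable_of_ae_mem hK (hμK n)
  have hint_sq : Integrable (fun x => (x - q) ^ 2) (μ n) :=
    (by fun_prop : Continuous fun x : ℝ => (x - q) ^ 2).continuousOn.integrable_of_ae_mem hK (hμK n)
  calc dist (∫ x, h x ∂μ n) (h q) = |∫ x, (h x - h q) ∂μ n| := by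
        rw [Real.dist_eq, integral_sub hint_h (integrable_const _), integral_const, probReal_univ,
          one_smul]
    _ ≤ ∫ x, |h x - h q| ∂μ n := abs_integral_le_integral_abs
    _ ≤ ∫ x, (ε / 2 + C * (x - q) ^ 2) ∂μ n :=
        integral_mono_ae (hint_h.sub (integrable_const _)).abs
          ((integrable_const _).add (hint_sq.const_mul C))
          (by filter_upwards [hμK n] with x hx using hC x hx)
    _ = ε / 2 + C * ∫ x, (x - q) ^ 2 ∂μ n := by
        rw [integral_add (integrable_const _) (hint_sq.const_mul C), integral_const, probReal_univ,
          one_smul, integral_const_mul]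
    _ < ε := by linarith

/-- If `i_n + j_n → ∞` and `i_n/(i_n+j_n) → q`, then `∫ h dβ_{i_n,j_n} → h(q)` for every
continuous `h : [0,1] → ℝ`. -/
theorem betaMeasure_tendsto_dirac (i j : ℕ → ℕ) (hi : ∀ n, 1 ≤ i n) (hj : ∀ n, 1 ≤ j n)
    (hsum : Tendsto (fun n => i n + j n) atTop atTop)
    (q : ℝ) (hq : q ∈ Set.Icc (0:ℝ) 1)
    (hratio : Tendsto (fun n => (i n : ℝ) / ((i n : ℝ) + (j n : ℝ))) atTop (nhds q))
    (h : ℝ → ℝ) (hh : ContinuousOn h (Set.Icc 0 1)) :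
    Tendsto (fun n => ∫ x, h x ∂(betaMeasure (i n) (j n))) atTop (nhds (h q)) := by
  have := fun n => isProbabilityMeasure_betaMeasure (hi n) (hj n)
  refine tendsto_integral_of_tendsto_integral_sq_sub isCompact_Icc
    (fun n => ae_mem_Icc_betaMeasure _ _) hq hh ?_
  simp_rw [integral_sq_sub_betaMeasure (hi _) (hj _)]
  have hs : Tendsto (fun n => (i n : ℝ) + j n + 1) atTop atTop :=
    tendsto_atTop_add_const_right _ 1
      ((tendsto_natCast_atTop_atTop.comp hsum).congr fun n => by simp)
  simpa using ((hratio.mul (tendsto_const_nhds.sub hratio)).div_atTop hs).add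
    ((hratio.sub_const q).pow 2)
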